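/- arXiv:1812.11774 — 5 statements merged into one kernel-verified Lean document; each statement's English description precedes it below -/
import Mathlib

section
/- For every integer n ≥ 1, a(n) = (n+1)! − d(n+1) − d(n). -/
open scoped Classical

noncomputable section

/-- The element of `c` minimizing `key`, if `c` is nonempty. -/
def pickMin {n : ℕ} {α : Type*} [LinearOrder α] (key : Fin n → α)
    (c : Finset (Fin n)) : Option (Fin n) :=
  if h : c.Nonempty then some (Classical.choose (Finset.exists_min_image c key h)) else none

/-- The set of matched `V`-vertices after the first `j` arrivals of the online greedy
process on the bipartite graph with `U`-side arrival order `u_0, u_1, …` and adjacency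
`adj`, in which each arriving `u_j` is matched to its currently unmatched neighbor
minimizing `key` (if any). -/
def greedyRun {n : ℕ} {α : Type*} [LinearOrder α] (adj : ℕ → Fin n → Prop)
    (key : Fin n → α) : ℕ → Finset (Fin n)
  | 0 => ∅
  | j + 1 =>
    match pickMin key ((Finset.univ.filter fun i => adj j i) \ greedyRun adj key j) with
    | some v => insert v (greedyRun adj key j)
    | none => greedyRun adj key j

/-- The `V`-vertex that the arriving vertex `u_j` (0-indexed) gets matched to, if any. -/
def greedyMatchU {n : ℕ} {α : Type*} [LinearOrder α] (adj : ℕ → Fin n → Prop)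
    (key : Fin n → α) (j : ℕ) : Option (Fin n) :=
  pickMin key ((Finset.univ.filter fun i => adj j i) \ greedyRun adj key j)

/-- Adjacency of the monotone graph `MonotoneG` (0-indexed):
`u_j` is adjacent to `v_i` iff `j ≤ i`. -/
def monoAdj (n : ℕ) : ℕ → Fin n → Prop := fun j i => j ≤ (i : ℕ)

/-- The set of matched `V`-vertices produced by the Ranking greedy process on `MonotoneG`
with permutation `π` (where `π i` is the rank of `v_i`, 0-indexed). -/
def rankMatched (n : ℕ) (π : Equiv.Perm (Fin n)) : Finset (Fin n) :=
  greedyRun (monoAdj n) (fun i => π i) n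

/-- `x(π)`: the number of edges of the matching produced by Ranking on `MonotoneG`. -/
def xSize (n : ℕ) (π : Equiv.Perm (Fin n)) : ℕ := (rankMatched n π).card

/-- `a(n) = Σ_π x(π)`, over all `n!` permutations. -/
def aVal (n : ℕ) : ℕ := ∑ π : Equiv.Perm (Fin n), xSize n π

/-- `a(n,i)` (with `i` 1-indexed): the number of permutations `π` of `{1,…,n}` for which
the vertex of rank `i` under `π` is matched by the Ranking greedy process on `MonotoneG`. -/
def aIdx (n i : ℕ) : ℕ :=
  (Finset.univ.filter fun π : Equiv.Perm (Fin n) =>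
    ∃ v : Fin n, (π v : ℕ) = i - 1 ∧ v ∈ rankMatched n π).card

/-- `d(m,i)` (with `i` 1-indexed): the number of permutations of `{1,…,m}` all of whose
fixed points (if any) lie among the first `i` items. -/
def dIdx (m i : ℕ) : ℕ :=
  (Finset.univ.filter fun σ : Equiv.Perm (Fin m) => ∀ x, σ x = x → (x : ℕ) < i).card

/-- `d(m)`: the number of derangements of `{1,…,m}`. -/
def numDer (m : ℕ) : ℕ :=
  (Finset.univ.filter fun σ : Equiv.Perm (Fin m) => ∀ x, σ x ≠ x).card

/-- The key for the greedy-by-price process: buy the cheapest available item,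
breaking ties in favor of the smaller index. -/
def priceKey {n : ℕ} (p : Fin n → ℝ) : Fin n → Lex (ℝ × ℕ) := fun i => toLex (p i, (i : ℕ))

/-- The utility `y(u_j)` of buyer `u_j` (0-indexed) in the greedy-by-price process:
`1 - p v` if `u_j` buys item `v`, and `0` if `u_j` remains unmatched. -/
def utility (n : ℕ) (adj : ℕ → Fin n → Prop) (p : Fin n → ℝ) (j : ℕ) : ℝ :=
  (greedyMatchU adj (priceKey p) j).elim 0 (fun v => 1 - p v)

/-- The revenue `r(v)` from item `v` in the greedy-by-price process:
`p v` if `v` is sold, and `0` otherwise. -/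
def revenue (n : ℕ) (adj : ℕ → Fin n → Prop) (p : Fin n → ℝ) (v : Fin n) : ℝ :=
  if v ∈ greedyRun adj (priceKey p) n then p v else 0

/-- The `m`-th harmonic number `H_m = Σ_{i=1}^m 1/i` (with `H_0 = 0`). -/
def harm (m : ℕ) : ℝ := ∑ i ∈ Finset.range m, (1 : ℝ) / (i + 1)

/-!
Instead of letting the vertices of `U` arrive, process the vertices of `V` in increasing rank,
keeping a counter `g` of the vertices matched so far: the vertex of rank `r`, at position `q r`,
is matched (to `u_g`) exactly when `g ≤ q r`. Hence `a(n)` is the sum over ranks `i` of the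
number `a(n, i)` of permutations under which the vertex of rank `i` is matched. Exchanging the
positions of ranks `i` and `i + 1`, and deleting the vertex of rank `i + 1` when it sits exactly
at position `g`, gives `a(n + 1, i) = a(n + 1, i + 1) + a(n, i)`. The number `d(n, t)` of
permutations whose fixed points all lie below `t` satisfies the same recursion
`d(n + 1, t + 1) = d(n + 1, t) + d(n, t)` (split on whether `t` is fixed), so
`a(n, i) = d(n, n - i)`, and the recursion for `d` telescopes to the formula.
-/

namespace MonotoneRanking

open Equiv Finset

section MatchCount

variable {q q' : ℕ → ℕ} {r s : ℕ}

/-- If `q r` is the position of the vertex of rank `r`, then `matchCount q r` counts the matched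
vertices of rank `< r`, and the vertex of rank `r` is matched, to `u_{matchCount q r}`, iff
`matchCount q r ≤ q r`. -/
def matchCount (q : ℕ → ℕ) : ℕ → ℕ
  | 0 => 0
  | r + 1 => matchCount q r + if matchCount q r ≤ q r then 1 else 0

lemma matchCount_succ_of_le (h : matchCount q r ≤ q r) :
    matchCount q (r + 1) = matchCount q r + 1 := by
  simp [matchCount, h]

lemma matchCount_succ_of_lt (h : q r < matchCount q r) :
    matchCount q (r + 1) = matchCount q r := by
  simp [matchCount, h.not_ge]

lemma matchCount_succ_le (q : ℕ → ℕ) (r : ℕ) : matchCount q (r + 1) ≤ matchCount q r + 1 := by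
  simp only [matchCount]; split <;> omega

lemma matchCount_mono (q : ℕ → ℕ) : Monotone (matchCount q) :=
  monotone_nat_of_le_succ fun r => by simp only [matchCount]; omega

lemma matchCount_le_self (q : ℕ → ℕ) (r : ℕ) : matchCount q r ≤ r := by
  induction r with
  | zero => rfl
  | succ r ih => have := matchCount_succ_le q r; omega

lemma matchCount_lt_matchCount (hrs : r < s) (hr : matchCount q r ≤ q r) :
    matchCount q r < matchCount q s := by
  have := matchCount_mono q (Nat.succ_le_of_lt hrs)
  rw [matchCount_succ_of_le hr] at this
  omega

lemma exists_matchCount_eq_of_lt {j : ℕ} (h : j < matchCount q s) :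
    ∃ r < s, matchCount q r = j ∧ matchCount q r ≤ q r := by
  induction s with
  | zero => simp [matchCount] at h
  | succ s ih =>
    by_cases hj : j < matchCount q s
    · obtain ⟨r, hr, hrj, hrq⟩ := ih hj
      exact ⟨r, by omega, hrj, hrq⟩
    · have hs := matchCount_succ_le q s
      by_cases hq : matchCount q s ≤ q s
      · exact ⟨s, by omega, by omega, hq⟩
      · rw [matchCount_succ_of_lt (not_le.mp hq)] at h
        omega

lemma matchCount_eq_of_forall_le_iff {m v : ℕ} (h : ∀ r < m, ∀ c ≤ v, (c ≤ q r ↔ c ≤ q' r))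
    (hm : matchCount q m ≤ v) : matchCount q' m = matchCount q m := by
  induction m with
  | zero => rfl
  | succ m ih =>
    have hmv : matchCount q m ≤ v := (matchCount_mono q m.le_succ).trans hm
    have hqq := h m m.lt_succ_self _ hmv
    simp only [matchCount, ih (fun r hr => h r (by omega)) hmv, hqq]

lemma matchCount_congr {m : ℕ} (h : ∀ r < m, q r = q' r) : matchCount q' m = matchCount q m :=
  matchCount_eq_of_forall_le_iff (v := matchCount q m) (fun r hr _ _ => by rw [h r hr]) le_rfl

end MatchCount

section Simulation

variable {n : ℕ}

def permSeq (u : Perm (Fin n)) (r : ℕ) : ℕ := if h : r < n then u ⟨r, h⟩ else 0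

lemma permSeq_of_lt (u : Perm (Fin n)) {r : ℕ} (h : r < n) : permSeq u r = u ⟨r, h⟩ := dif_pos h

@[simp]
lemma permSeq_val (u : Perm (Fin n)) (r : Fin n) : permSeq u r = u r := permSeq_of_lt u r.isLt

def matchedByRank (π : Perm (Fin n)) (j : ℕ) : Finset (Fin n) :=
  {v | matchCount (permSeq π.symm) (π v) ≤ v ∧ matchCount (permSeq π.symm) (π v) < j}

variable {α : Type*} [LinearOrder α]

lemma pickMin_eq_some_iff {key : Fin n → α} (hkey : Function.Injective key) {c : Finset (Fin n)}
    {v : Fin n} :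
    pickMin key c = some v ↔ v ∈ c ∧ ∀ b ∈ c, key v ≤ key b := by
  unfold pickMin
  split_ifs with hc
  · obtain ⟨hmem, hmin⟩ := Classical.choose_spec (exists_min_image c key hc)
    rw [Option.some_inj]
    constructor
    · rintro rfl; exact ⟨hmem, hmin⟩
    · rintro ⟨hv, hvmin⟩
      exact hkey (le_antisymm (hmin v hv) (hvmin _ hmem))
  · simp only [false_iff, not_and]
    exact fun hv => absurd ⟨v, hv⟩ hc

lemma greedyRun_succ (adj : ℕ → Fin n → Prop) (key : Fin n → α) (j : ℕ) :
    greedyRun adj key (j + 1) =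
      (greedyMatchU adj key j).elim (greedyRun adj key j) (insert · (greedyRun adj key j)) := by
  simp only [greedyRun, greedyMatchU]
  split <;> simp_all

/-- Any candidate of smaller rank than the vertex with counter value `j` is either matched already
or lies before position `j`. -/
lemma greedyMatchU_monoAdj_eq_some_iff (π : Perm (Fin n)) {j : ℕ}
    (hj : greedyRun (monoAdj n) (fun i => π i) j = matchedByRank π j) (v : Fin n) :
    greedyMatchU (monoAdj n) (fun i => π i) j = some v ↔
      matchCount (permSeq π.symm) (π v) ≤ v ∧ matchCount (permSeq π.symm) (π v) = j := by
  have hmem : ∀ b, b ∈ (univ.filter fun i => monoAdj n j i) \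
      greedyRun (monoAdj n) (fun i => π i) j ↔
      j ≤ b ∧ (matchCount (permSeq π.symm) (π b) ≤ b → j ≤ matchCount (permSeq π.symm) (π b)) := by
    intro b
    rw [mem_sdiff, mem_filter, hj, matchedByRank, mem_filter]
    simp only [mem_univ, true_and, monoAdj]
    omega
  rw [greedyMatchU, pickMin_eq_some_iff π.injective]
  simp only [hmem]
  constructor
  · rintro ⟨⟨hjv, hv⟩, hmin⟩
    have hgv : matchCount (permSeq π.symm) (π v) ≤ j := by
      by_contra! hlt
      obtain ⟨r, hr, hrj, hrq⟩ := exists_matchCount_eq_of_lt hlt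
      have hrn : r < n := hr.trans (π v).isLt
      have hπp : π (π.symm ⟨r, hrn⟩) = ⟨r, hrn⟩ := π.apply_symm_apply _
      rw [permSeq_of_lt _ hrn] at hrq
      have hp := hmin (π.symm ⟨r, hrn⟩) ⟨by omega, by simp only [hπp, Fin.val_mk]; omega⟩
      simp only [hπp, Fin.le_def] at hp
      omega
    have := matchCount_le_self (permSeq π.symm) (π v)
    by_cases hvq : matchCount (permSeq π.symm) (π v) ≤ v <;> omega
  · rintro ⟨hvq, hvj⟩
    refine ⟨⟨by omega, by omega⟩, fun b ⟨hjb, hb⟩ => ?_⟩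
    by_contra! hlt
    rw [Fin.lt_def] at hlt
    by_cases hbq : matchCount (permSeq π.symm) (π b) ≤ b
    · have := matchCount_lt_matchCount (q := permSeq π.symm) hlt
        (by rwa [permSeq_val, symm_apply_apply])
      omega
    · have := matchCount_mono (permSeq π.symm) hlt.le
      omega

theorem greedyRun_monoAdj (π : Perm (Fin n)) (j : ℕ) :
    greedyRun (monoAdj n) (fun i => π i) j = matchedByRank π j := by
  induction j with
  | zero => ext v; simp [greedyRun, matchedByRank]
  | succ j ih =>
    have hmatch := greedyMatchU_monoAdj_eq_some_iff π ih
    rw [greedyRun_succ, ih]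
    cases h : greedyMatchU (monoAdj n) (fun i => π i) j with
    | none =>
      ext v
      have := (hmatch v).not.mp (by simp [h])
      simp only [Option.elim, matchedByRank, mem_filter_univ]
      omega
    | some w =>
      have hw := (hmatch w).mp h
      ext v
      simp only [Option.elim, matchedByRank, mem_insert, mem_filter_univ]
      constructor
      · rintro (rfl | hv) <;> omega
      · intro hv
        by_cases hvj : matchCount (permSeq π.symm) (π v) = j
        · exact .inl (Option.some_injective _ (((hmatch v).mpr ⟨hv.1, hvj⟩).symm.trans h))
        · exact .inr (by omega)

end Simulation

section Counting

variable {n : ℕ}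

/-- Here `u` sends each rank to the position of the vertex of that rank. -/
def RankMatched (u : Perm (Fin n)) (i : ℕ) : Prop := matchCount (permSeq u) i ≤ permSeq u i

def matchedSet (n i : ℕ) : Finset (Perm (Fin n)) := {u | RankMatched u i}

lemma xSize_eq_card_rankMatched (π : Perm (Fin n)) :
    xSize n π = #{r : Fin n | RankMatched π.symm r} := by
  rw [xSize, rankMatched, greedyRun_monoAdj]
  refine card_equiv π fun v => ?_
  have := matchCount_le_self (permSeq π.symm) (π v)
  simp only [matchedByRank, RankMatched, mem_filter_univ, permSeq_val, symm_apply_apply]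
  omega

lemma aVal_eq_sum_card_matchedSet (n : ℕ) : aVal n = ∑ i ∈ range n, #(matchedSet n i) :=
  calc aVal n = ∑ u : Perm (Fin n), #{r : Fin n | RankMatched u r} := by
        rw [aVal, ← Equiv.sum_comp (Equiv.inv (Perm (Fin n)))]
        simp only [xSize_eq_card_rankMatched, Equiv.inv_apply, Perm.inv_def, symm_symm]
    _ = ∑ r : Fin n, #(matchedSet n r) := by
        simp only [card_filter, matchedSet]
        exact sum_comm
    _ = ∑ i ∈ range n, #(matchedSet n i) :=
        Fin.sum_univ_eq_sum_range (fun i => #(matchedSet n i)) n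

end Counting

section Surgery

variable {m : ℕ}

/-- The permutation of `Fin (m + 1)` sending `a` to `b` and otherwise acting as `σ` on the
remaining points, each listed in increasing order. -/
def insertAt (a b : Fin (m + 1)) (σ : Perm (Fin m)) : Perm (Fin (m + 1)) :=
  (finSuccEquiv' a).trans ((optionCongr σ).trans (finSuccEquiv' b).symm)

def removeAt (a b : Fin (m + 1)) (τ : Perm (Fin (m + 1))) : Perm (Fin m) :=
  removeNone ((finSuccEquiv' a).symm.trans (τ.trans (finSuccEquiv' b)))

@[simp]
lemma insertAt_apply_self (a b : Fin (m + 1)) (σ : Perm (Fin m)) : insertAt a b σ a = b := by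
  simp [insertAt, finSuccEquiv'_at]

@[simp]
lemma insertAt_apply_succAbove (a b : Fin (m + 1)) (σ : Perm (Fin m)) (j : Fin m) :
    insertAt a b σ (a.succAbove j) = b.succAbove (σ j) := by
  simp [insertAt]

@[simp]
lemma removeAt_insertAt (a b : Fin (m + 1)) (σ : Perm (Fin m)) :
    removeAt a b (insertAt a b σ) = σ := by
  ext j : 1
  have h : ((finSuccEquiv' a).symm.trans ((insertAt a b σ).trans (finSuccEquiv' b))) (some j) =
      some (σ j) := by simp
  exact Option.some_injective _ ((removeNone_some _ ⟨_, h⟩).trans h)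

lemma insertAt_removeAt {a b : Fin (m + 1)} {τ : Perm (Fin (m + 1))} (h : τ a = b) :
    insertAt a b (removeAt a b τ) = τ := by
  ext x
  rcases eq_or_ne x a with rfl | hx
  · simp [h]
  obtain ⟨j, rfl⟩ := Fin.exists_succAbove_eq hx
  have hne : τ (a.succAbove j) ≠ b := h ▸ τ.injective.ne (Fin.succAbove_ne a j)
  obtain ⟨y, hy⟩ := Fin.exists_succAbove_eq hne
  have hρ : ((finSuccEquiv' a).symm.trans (τ.trans (finSuccEquiv' b))) (some j) = some y := by
    simp [← hy]
  have hj : removeAt a b τ j = y := Option.some_injective _ ((removeNone_some _ ⟨_, hρ⟩).trans hρ)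
  rw [insertAt_apply_succAbove, hj, hy]

lemma le_succAbove_iff {a : Fin (m + 1)} {c : ℕ} (hc : c ≤ a) (j : Fin m) :
    c ≤ a.succAbove j ↔ c ≤ j := by
  rcases lt_or_ge j.castSucc a with h | h
  · simp [Fin.succAbove_of_castSucc_lt _ _ h]
  · rw [Fin.succAbove_of_le_castSucc _ _ h, Fin.val_succ]
    rw [Fin.le_def, Fin.val_castSucc] at h
    omega

end Surgery

lemma forall_insertAt_self_fixed_lt_iff {m : ℕ} (a : Fin (m + 1)) (u : Perm (Fin m)) :
    (∀ x, insertAt a a u x = x → (x : ℕ) < a + 1) ↔ ∀ j, u j = j → (j : ℕ) < a := by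
  have hsucc (j : Fin m) : (a.succAbove j : ℕ) < a + 1 ↔ (j : ℕ) < a := by
    have hne := Fin.val_ne_of_ne (Fin.succAbove_ne a j)
    have := le_succAbove_iff (a := a) le_rfl j
    omega
  simp only [Fin.forall_iff_succAbove a, insertAt_apply_self, insertAt_apply_succAbove,
    Fin.succAbove_right_inj, hsucc, lt_add_one, implies_true, true_and]

lemma dIdx_succ_succ {m t : ℕ} (ht : t ≤ m) :
    dIdx (m + 1) (t + 1) = dIdx (m + 1) t + dIdx m t := by
  obtain ⟨a, rfl⟩ : ∃ a : Fin (m + 1), (a : ℕ) = t := ⟨⟨t, by omega⟩, rfl⟩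
  rw [dIdx, ← card_filter_add_card_filter_not (fun σ => σ a = a), add_comm, filter_filter,
    filter_filter]
  congr 1
  · congr 1
    refine filter_congr fun σ _ => ⟨fun ⟨h, ha⟩ x hx => ?_, fun h => ⟨fun x hx => ?_, fun ha => ?_⟩⟩
    · have := h x hx
      have : x ≠ a := fun hxa => ha (hxa ▸ hx)
      have : (x : ℕ) ≠ a := fun hxa => this (Fin.ext hxa)
      omega
    · have := h x hx; omega
    · have := h a ha; omega
  · refine card_nbij' (removeAt a a) (insertAt a a) (fun σ hσ => ?_) (fun u hu => ?_)
      (fun σ hσ => insertAt_removeAt (mem_filter.mp hσ).2.2) (fun u _ => removeAt_insertAt a a u)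
    · obtain ⟨hfix, ha⟩ := (mem_filter.mp hσ).2
      rw [mem_coe, mem_filter_univ, ← forall_insertAt_self_fixed_lt_iff a, insertAt_removeAt ha]
      exact hfix
    · rw [mem_coe, mem_filter_univ] at hu
      rw [mem_coe, mem_filter_univ, forall_insertAt_self_fixed_lt_iff a]
      exact ⟨hu, insertAt_apply_self a a u⟩

lemma dIdx_self (m : ℕ) : dIdx m m = m.factorial := by
  simp [dIdx, Finset.card_univ, Fintype.card_perm]

lemma dIdx_zero (m : ℕ) : dIdx m 0 = numDer m := by
  simp [dIdx, numDer]

section RankRecursion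

variable {n m i : ℕ}

lemma permSeq_mul_swap (u : Perm (Fin n)) (a b : Fin n) (r : ℕ) :
    permSeq (u * swap a b) r = permSeq u (swap (a : ℕ) b r) := by
  by_cases hr : r < n
  · have : (r : ℕ) = (⟨r, hr⟩ : Fin n) := rfl
    rw [this, Fin.val_injective.swap_apply, permSeq_val, permSeq_val, Perm.mul_apply]
  · have hra : r ≠ a := fun h => hr (h ▸ a.isLt)
    have hrb : r ≠ b := fun h => hr (h ▸ b.isLt)
    simp [swap_apply_of_ne_of_ne hra hrb, permSeq, hr]

lemma card_matchedSet_succ_sdiff (hi : i < m) :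
    #(matchedSet (m + 1) (i + 1) \ matchedSet (m + 1) i) =
      #((matchedSet (m + 1) i \ matchedSet (m + 1) (i + 1)).filter
        fun u => permSeq u (i + 1) < matchCount (permSeq u) i) := by
  let a : Fin (m + 1) := ⟨i, by omega⟩
  let a' : Fin (m + 1) := ⟨i + 1, by omega⟩
  refine card_equiv (Equiv.mulRight (swap a a')) fun u => ?_
  have hseq := permSeq_mul_swap u a a'
  have hcount : matchCount (permSeq (u * swap a a')) i = matchCount (permSeq u) i :=
    (matchCount_congr fun r hr => by
      rw [hseq, swap_apply_of_ne_of_ne (by simp [a]; omega) (by simp [a']; omega)]).symm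
  have hi : permSeq (u * swap a a') i = permSeq u (i + 1) := by
    rw [hseq]; exact congrArg _ (swap_apply_left _ _)
  have hi' : permSeq (u * swap a a') (i + 1) = permSeq u i := by
    rw [hseq]; exact congrArg _ (swap_apply_right _ _)
  simp only [matchedSet, mem_sdiff, mem_filter, mem_univ, true_and, coe_mulRight]
  simp only [RankMatched, matchCount, hcount, hi, hi']
  split_ifs <;> omega

lemma permSeq_insertAt_of_lt {a : Fin (m + 1)} (b : Fin (m + 1)) (u : Perm (Fin m)) {r : ℕ}
    (hr : r < a) : permSeq (insertAt a b u) r = b.succAbove (u ⟨r, by omega⟩) := by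
  have : (⟨r, by omega⟩ : Fin (m + 1)) = a.succAbove ⟨r, by omega⟩ :=
    (Fin.succAbove_of_castSucc_lt _ (⟨r, by omega⟩ : Fin m) (Fin.lt_def.mpr hr)).symm
  rw [permSeq_of_lt _ (by omega), this, insertAt_apply_succAbove]

/-- Inserting the value `b` at position `i + 1` moves no value `q r` across a threshold `c ≤ b`,
so it changes nothing at ranks `≤ i` while the counter stays `≤ b`. -/
lemma rankMatched_insertAt_iff (hi : i < m) (u : Perm (Fin m)) (b : Fin (m + 1)) :
    (RankMatched (insertAt ⟨i + 1, by omega⟩ b u) i ∧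
        matchCount (permSeq (insertAt ⟨i + 1, by omega⟩ b u)) i = b) ↔
      RankMatched u i ∧ matchCount (permSeq u) i = b := by
  set w := insertAt ⟨i + 1, by omega⟩ b u
  have hthr : ∀ r < i + 1, ∀ c ≤ (b : ℕ), (c ≤ permSeq u r ↔ c ≤ permSeq w r) := by
    intro r hr c hc
    rw [permSeq_insertAt_of_lt b u hr, permSeq_of_lt u (by omega), le_succAbove_iff hc]
  have hcount (h : matchCount (permSeq u) i ≤ b ∨ matchCount (permSeq w) i ≤ b) :
      matchCount (permSeq w) i = matchCount (permSeq u) i := by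
    rcases h with h | h
    · exact matchCount_eq_of_forall_le_iff (fun r hr => hthr r (by omega)) h
    · exact (matchCount_eq_of_forall_le_iff
        (fun r hr c hc => (hthr r (by omega) c hc).symm) h).symm
  unfold RankMatched
  constructor
  · rintro ⟨hw, hwb⟩
    rw [hcount (.inr hwb.le)] at hw hwb
    exact ⟨(hthr i i.lt_succ_self _ hwb.le).mpr (hwb ▸ hw), hwb⟩
  · rintro ⟨hu, hub⟩
    rw [hcount (.inl hub.le)]
    exact ⟨(hthr i i.lt_succ_self _ hub.le).mp (hub ▸ hu), hub⟩

lemma card_matchedSet_insertAt (hi : i < m) :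
    #{w : Perm (Fin (m + 1)) | RankMatched w i ∧ permSeq w (i + 1) = matchCount (permSeq w) i} =
      #(matchedSet m i) := by
  let a : Fin (m + 1) := ⟨i + 1, by omega⟩
  have hwa (w : Perm (Fin (m + 1))) : permSeq w (i + 1) = w a := permSeq_of_lt w _
  have hbound (u : Perm (Fin m)) : matchCount (permSeq u) i < m + 1 := by
    have := matchCount_le_self (permSeq u) i; omega
  have hremove {w : Perm (Fin (m + 1))} (hw : RankMatched w i ∧ matchCount (permSeq w) i = w a) :
      RankMatched (removeAt a (w a) w) i ∧ matchCount (permSeq (removeAt a (w a) w)) i = w a := by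
    rwa [← rankMatched_insertAt_iff hi, insertAt_removeAt rfl]
  refine card_nbij' (fun w => removeAt a (w a) w)
    (fun u => insertAt a ⟨matchCount (permSeq u) i, hbound u⟩ u) (fun w hw => ?_) (fun u hu => ?_)
    (fun w hw => ?_) (fun u _ => by simp)
  · simp only [mem_coe, mem_filter_univ, hwa, matchedSet] at hw ⊢
    exact (hremove ⟨hw.1, hw.2.symm⟩).1
  · simp only [mem_coe, mem_filter_univ, hwa, matchedSet] at hu ⊢
    have := (rankMatched_insertAt_iff hi u ⟨_, hbound u⟩).mpr ⟨hu, rfl⟩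
    exact ⟨this.1, by rw [insertAt_apply_self, this.2]⟩
  · simp only [mem_coe, mem_filter_univ, hwa] at hw
    have hb : (⟨matchCount (permSeq (removeAt a (w a) w)) i, hbound _⟩ : Fin (m + 1)) = w a :=
      Fin.ext (hremove ⟨hw.1, hw.2.symm⟩).2
    simp only [hb]
    exact insertAt_removeAt rfl

lemma card_matchedSet_succ (hi : i < m) :
    #(matchedSet (m + 1) i) = #(matchedSet (m + 1) (i + 1)) + #(matchedSet m i) := by
  have hi_sub := card_sdiff_add_card_inter (matchedSet (m + 1) i) (matchedSet (m + 1) (i + 1))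
  have hi_succ_sub :=
    card_sdiff_add_card_inter (matchedSet (m + 1) (i + 1)) (matchedSet (m + 1) i)
  have hsplit := card_filter_add_card_filter_not
    (s := matchedSet (m + 1) i \ matchedSet (m + 1) (i + 1))
    (fun u => permSeq u (i + 1) < matchCount (permSeq u) i)
  have hrest : (matchedSet (m + 1) i \ matchedSet (m + 1) (i + 1)).filter
      (fun u => ¬ permSeq u (i + 1) < matchCount (permSeq u) i) =
      ({w | RankMatched w i ∧ permSeq w (i + 1) = matchCount (permSeq w) i} :
        Finset (Perm (Fin (m + 1)))) := by
    ext u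
    simp only [matchedSet, mem_sdiff, mem_filter, mem_univ, true_and]
    simp only [RankMatched, matchCount]
    split_ifs <;> omega
  rw [inter_comm, card_matchedSet_succ_sdiff hi] at hi_succ_sub
  rw [hrest, card_matchedSet_insertAt hi] at hsplit
  omega

lemma card_matchedSet_zero (n : ℕ) : #(matchedSet n 0) = n.factorial := by
  simp [matchedSet, RankMatched, matchCount, Finset.card_univ, Fintype.card_perm]

end RankRecursion

lemma card_matchedSet_eq_dIdx {n i : ℕ} (hi : i < n) : #(matchedSet n i) = dIdx n (n - i) := by
  induction n generalizing i with
  | zero => omega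
  | succ m ihm =>
    induction i with
    | zero => rw [card_matchedSet_zero, Nat.sub_zero, dIdx_self]
    | succ i ihi =>
      have hrec := card_matchedSet_succ (m := m) (i := i) (by omega)
      have hdrec := dIdx_succ_succ (m := m) (t := m - i) (by omega)
      rw [show m - i + 1 = m + 1 - i by omega, ← ihi (by omega), hrec, ihm (by omega)] at hdrec
      rw [show m + 1 - (i + 1) = m - i by omega]
      omega

lemma aVal_eq_sum_dIdx (n : ℕ) : aVal n = ∑ t ∈ range n, dIdx n (t + 1) := by
  rw [aVal_eq_sum_card_matchedSet, ← sum_range_reflect]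
  refine sum_congr rfl fun t ht => ?_
  rw [mem_range] at ht
  rw [card_matchedSet_eq_dIdx (by omega), show n - (n - 1 - t) = t + 1 by omega]

lemma sum_range_dIdx (n : ℕ) :
    ∑ t ∈ range (n + 1), (dIdx n t : ℤ) = (n + 1).factorial - numDer (n + 1) := by
  have hstep : ∀ t ∈ range (n + 1), (dIdx n t : ℤ) = dIdx (n + 1) (t + 1) - dIdx (n + 1) t := by
    intro t ht
    rw [dIdx_succ_succ (by rw [mem_range] at ht; omega)]
    push_cast; ring
  rw [sum_congr rfl hstep, sum_range_sub (fun t => (dIdx (n + 1) t : ℤ)), dIdx_self, dIdx_zero]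

end MonotoneRanking

theorem stmt_0_general (n : ℕ) :
    (aVal n : ℤ) = (Nat.factorial (n + 1) : ℤ) - numDer (n + 1) - numDer n := by
  have hsum := MonotoneRanking.sum_range_dIdx n
  rw [Finset.sum_range_succ', MonotoneRanking.dIdx_zero] at hsum
  rw [MonotoneRanking.aVal_eq_sum_dIdx, Nat.cast_sum]
  linarith

/-- For every integer `n ≥ 1`, `a(n) = (n+1)! − d(n+1) − d(n)`. -/
theorem stmt_0 (n : ℕ) (hn : 1 ≤ n) :
    (aVal n : ℤ) = (Nat.factorial (n + 1) : ℤ) - numDer (n + 1) - numDer n :=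
  stmt_0_general n
end
end

section
/- For every integer n ≥ 1 and every i with 1 ≤ i ≤ n, a(n,i) = d(n, n+1−i). -/
open scoped Classical

noncomputable section

/-!
Replay Ranking on `MonotoneG` rank by rank: the vertex of rank `r` is matched iff the number `c`
of matched vertices of smaller rank is at most its index, and then `u_c` takes it. Let `A(n, r)`
count the permutations whose vertex of rank `r` is matched, and split them according to whether
the vertex of rank `r + 1` has index exactly `c`. If it does, deleting it leaves `c` unchanged
and gives `A(n - 1, r)`; if not, swapping ranks `r` and `r + 1` where necessary gives
`A(n, r + 1)`. Hence `A(n, r) = A(n, r + 1) + A(n - 1, r)`, which is the recursion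
`d(n, k + 1) = d(n, k) + d(n - 1, k)` obtained by asking whether `k` is a fixed point; both
`A(n, 0)` and `d(n, n)` equal `n!`.
-/

open Finset

/-- If `g r` is the index of the vertex of rank `r`, then `matchCount g r` is the number of
matched vertices of rank `< r`. -/
def matchCount (g : ℕ → ℕ) : ℕ → ℕ
  | 0 => 0
  | r + 1 => matchCount g r + if matchCount g r ≤ g r then 1 else 0

section matchCount

variable {g : ℕ → ℕ}

theorem matchCount_succ (g : ℕ → ℕ) (r : ℕ) :
    matchCount g (r + 1) = matchCount g r + if matchCount g r ≤ g r then 1 else 0 := rfl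

theorem matchCount_succ_le (g : ℕ → ℕ) (r : ℕ) :
    matchCount g (r + 1) ≤ matchCount g r + 1 := by
  rw [matchCount_succ]; split <;> omega

theorem matchCount_le (g : ℕ → ℕ) : ∀ r, matchCount g r ≤ r
  | 0 => le_rfl
  | r + 1 => by have := matchCount_le g r; have := matchCount_succ_le g r; omega

theorem matchCount_mono (g : ℕ → ℕ) : Monotone (matchCount g) :=
  monotone_nat_of_le_succ fun r => by rw [matchCount_succ]; split <;> omega

theorem matchCount_lt_matchCount {r s : ℕ} (hr : matchCount g r ≤ g r) (hrs : r < s) :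
    matchCount g r < matchCount g s := by
  have := matchCount_mono g (Nat.succ_le_of_lt hrs)
  rw [matchCount_succ, if_pos hr] at this
  omega

theorem eq_of_matchCount_eq {r s : ℕ} (hr : matchCount g r ≤ g r) (hs : matchCount g s ≤ g s)
    (h : matchCount g r = matchCount g s) : r = s := by
  by_contra hne
  rcases Nat.lt_or_gt_of_ne hne with hrs | hsr
  · exact (matchCount_lt_matchCount hr hrs).ne h
  · exact (matchCount_lt_matchCount hs hsr).ne h.symm

theorem exists_matchCount_eq_of_lt {j : ℕ} : ∀ {R : ℕ}, j < matchCount g R →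
    ∃ r < R, matchCount g r = j ∧ matchCount g r ≤ g r
  | 0, h => absurd h (Nat.not_lt_zero _)
  | R + 1, h => by
    by_cases hR : j < matchCount g R
    · obtain ⟨r, hr, hrj, hmatched⟩ := exists_matchCount_eq_of_lt hR
      exact ⟨r, by omega, hrj, hmatched⟩
    · rw [matchCount_succ] at h
      split at h
      · exact ⟨R, by omega, by omega, by assumption⟩
      · omega

/-- The count is only ever compared with the values, so values may change as long as they stay
on the same side of a bound `c` of the count. -/
theorem matchCount_eq_of_agree {g' : ℕ → ℕ} {c : ℕ} : ∀ {j : ℕ},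
    (∀ k < j, g' k = g k ∨ (c ≤ g k ∧ c ≤ g' k)) → matchCount g j ≤ c →
      matchCount g' j = matchCount g j
  | 0, _, _ => rfl
  | j + 1, hagree, hc => by
    have hj : matchCount g j ≤ c := (matchCount_mono g j.le_succ).trans hc
    have ih := matchCount_eq_of_agree (fun k hk => hagree k (by omega)) hj
    rw [matchCount_succ, matchCount_succ, ih]
    rcases hagree j (by omega) with h | ⟨h, h'⟩
    · rw [h]
    · rw [if_pos (by omega), if_pos (by omega)]

theorem matchCount_congr {g' : ℕ → ℕ} {j : ℕ} (h : ∀ k < j, g' k = g k) :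
    matchCount g' j = matchCount g j :=
  matchCount_eq_of_agree (c := j) (fun k hk => Or.inl (h k hk)) (matchCount_le g j)

end matchCount

/-- A permutation of `Fin n` as a function on `ℕ`, with junk value `0` from `n` on. -/
def natPerm {n : ℕ} (σ : Equiv.Perm (Fin n)) (k : ℕ) : ℕ :=
  if h : k < n then σ ⟨k, h⟩ else 0

theorem natPerm_of_lt {n : ℕ} (σ : Equiv.Perm (Fin n)) {k : ℕ} (h : k < n) :
    natPerm σ k = σ ⟨k, h⟩ := dif_pos h

theorem natPerm_val {n : ℕ} (σ : Equiv.Perm (Fin n)) (v : Fin n) : natPerm σ v = σ v :=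
  natPerm_of_lt σ v.isLt

theorem natPerm_mul_swap {n : ℕ} (σ : Equiv.Perm (Fin n)) (a b : Fin n) (k : ℕ) :
    natPerm (σ * Equiv.swap a b) k = natPerm σ (Equiv.swap (a : ℕ) b k) := by
  by_cases hk : k < n
  · rw [natPerm_of_lt _ hk, Fin.val_injective.swap_apply a b ⟨k, hk⟩, natPerm_val]
    rfl
  · rw [Equiv.swap_apply_of_ne_of_ne (by omega) (by omega)]
    simp [natPerm, hk]

theorem pickMin_eq_some {n : ℕ} {α : Type*} [LinearOrder α] {key : Fin n → α}
    {c : Finset (Fin n)} {v : Fin n} (hv : v ∈ c)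
    (hmin : ∀ u ∈ c, u ≠ v → key v < key u) :
    pickMin key c = some v := by
  have hne : c.Nonempty := ⟨v, hv⟩
  obtain ⟨hmem, hle⟩ := Classical.choose_spec (c.exists_min_image key hne)
  rw [pickMin, dif_pos hne, Option.some_inj]
  by_contra hne'
  exact (hmin _ hmem hne').not_ge (hle v hv)

theorem pickMin_empty {n : ℕ} {α : Type*} [LinearOrder α] (key : Fin n → α) :
    pickMin key ∅ = none :=
  dif_neg Finset.not_nonempty_empty

section Ranking

variable {n : ℕ} (π : Equiv.Perm (Fin n))

/-- The index `j` of the arrival `u_j` that matches `v`, provided `v` is matched at all. -/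
def matchIndex (v : Fin n) : ℕ := matchCount (natPerm π⁻¹) (π v)

theorem natPerm_inv_apply (v : Fin n) : natPerm π⁻¹ (π v) = v := by
  simp [natPerm_val]

variable {π}

theorem matchIndex_inj {u v : Fin n} (hu : matchIndex π u ≤ u) (hv : matchIndex π v ≤ v)
    (h : matchIndex π u = matchIndex π v) : u = v := by
  rw [matchIndex, ← natPerm_inv_apply π u] at hu
  rw [matchIndex, ← natPerm_inv_apply π v] at hv
  exact π.injective (Fin.ext (eq_of_matchCount_eq hu hv h))

/-- Every vertex that is still a candidate for `u_j` has rank at least that of a vertex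
matched with index `j`. -/
theorem exists_matchIndex_eq {j : ℕ} {u : Fin n} (hj : j ≤ u)
    (hu : ¬(matchIndex π u ≤ u ∧ matchIndex π u < j)) :
    ∃ v, matchIndex π v ≤ v ∧ matchIndex π v = j ∧ π v ≤ π u := by
  have hlt : j < matchCount (natPerm π⁻¹) (π u + 1) := by
    rw [matchCount_succ, natPerm_inv_apply]
    unfold matchIndex at hu
    split <;> omega
  obtain ⟨r, hr, hrj, hmatched⟩ := exists_matchCount_eq_of_lt hlt
  have hrn : r < n := by have := (π u).isLt; omega
  refine ⟨π⁻¹ ⟨r, hrn⟩, ?_, ?_, ?_⟩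
  · simpa [matchIndex, natPerm_of_lt _ hrn] using hmatched
  · simpa [matchIndex] using hrj
  · simpa [Fin.le_def] using Nat.le_of_lt_succ hr

theorem greedyRun_monoAdj (j : ℕ) :
    greedyRun (monoAdj n) (fun i => π i) j =
      univ.filter fun v => matchIndex π v ≤ v ∧ matchIndex π v < j := by
  induction j with
  | zero => simp [greedyRun]
  | succ j ih =>
    set C := univ.filter (fun i => monoAdj n j i) \ greedyRun (monoAdj n) (fun i => π i) j with hC
    have memC (u : Fin n) :
        u ∈ C ↔ j ≤ u ∧ ¬(matchIndex π u ≤ u ∧ matchIndex π u < j) := by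
      rw [hC, mem_sdiff, mem_filter, ih, mem_filter]
      simp only [mem_univ, true_and, monoAdj]
    by_cases hA : ∃ v, matchIndex π v ≤ v ∧ matchIndex π v = j
    · obtain ⟨v, hv, hvj⟩ := hA
      have hpick : pickMin (fun i => π i) C = some v := by
        refine pickMin_eq_some ((memC v).2 ⟨by omega, by omega⟩) fun u hu huv => ?_
        obtain ⟨w, hw, hwj, hwu⟩ := exists_matchIndex_eq ((memC u).1 hu).1 ((memC u).1 hu).2
        obtain rfl := matchIndex_inj hw hv (hwj.trans hvj.symm)
        exact lt_of_le_of_ne hwu (π.injective.ne (Ne.symm huv))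
      rw [greedyRun, ← hC, hpick, ih]
      ext u
      simp only [mem_insert, mem_filter, mem_univ, true_and]
      constructor
      · rintro (rfl | ⟨hu, huj⟩) <;> omega
      · rintro ⟨hu, huj⟩
        by_cases hlt : matchIndex π u < j
        · exact Or.inr ⟨hu, hlt⟩
        · exact Or.inl (matchIndex_inj hu hv (by omega))
    · have hCe : C = ∅ := by
        refine Finset.eq_empty_of_forall_notMem fun u hu => ?_
        obtain ⟨v, hv, hvj, -⟩ := exists_matchIndex_eq ((memC u).1 hu).1 ((memC u).1 hu).2
        exact hA ⟨v, hv, hvj⟩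
      rw [greedyRun, ← hC, hCe, pickMin_empty, ih]
      ext u
      simp only [mem_filter, mem_univ, true_and]
      refine and_congr_right fun hu => ⟨fun h => by omega, fun h => ?_⟩
      exact lt_of_le_of_ne (Nat.le_of_lt_succ h) fun heq => hA ⟨u, hu, heq⟩

theorem mem_rankMatched {v : Fin n} : v ∈ rankMatched n π ↔ matchIndex π v ≤ v := by
  rw [rankMatched, greedyRun_monoAdj]
  simp only [mem_filter, mem_univ, true_and, and_iff_left_iff_imp]
  exact fun h => h.trans_lt v.isLt

end Ranking

section EraseInsert

variable {m : ℕ}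

theorem Fin.val_succAbove (p : Fin (m + 1)) (j : Fin m) :
    (p.succAbove j : ℕ) = if (j : ℕ) < p then (j : ℕ) else (j : ℕ) + 1 := by
  split_ifs with h
  · rw [Fin.succAbove_of_castSucc_lt _ _ (by rwa [Fin.lt_def]), Fin.val_castSucc]
  · rw [Fin.succAbove_of_le_castSucc _ _ (by rw [Fin.le_def]; simpa using h), Fin.val_succ]

/-- Removes `a` from the domain and `σ a` from the range of `σ`, relabelling both sides
monotonically (see `succAbove_permErase`). -/
def permErase (a : Fin (m + 1)) (σ : Equiv.Perm (Fin (m + 1))) : Equiv.Perm (Fin m) :=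
  Equiv.removeNone ((finSuccEquiv' a).symm.trans (σ.trans (finSuccEquiv' (σ a))))

def permInsert (a b : Fin (m + 1)) (τ : Equiv.Perm (Fin m)) : Equiv.Perm (Fin (m + 1)) :=
  (finSuccEquiv' a).trans ((Equiv.optionCongr τ).trans (finSuccEquiv' b).symm)

theorem succAbove_permErase (a : Fin (m + 1)) (σ : Equiv.Perm (Fin (m + 1))) (j : Fin m) :
    (σ a).succAbove (permErase a σ j) = σ (a.succAbove j) := by
  obtain ⟨k, hk⟩ := Fin.exists_succAbove_eq (σ.injective.ne (Fin.succAbove_ne a j))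
  have hsome : some (permErase a σ j) = some k := by
    rw [permErase, Equiv.removeNone_some _ ⟨k, ?_⟩] <;>
      simp [finSuccEquiv'_symm_some, ← hk, finSuccEquiv'_succAbove]
  rw [Option.some_inj.mp hsome, hk]

theorem permInsert_apply_self (a b : Fin (m + 1)) (τ : Equiv.Perm (Fin m)) :
    permInsert a b τ a = b := by
  simp [permInsert, finSuccEquiv'_at, finSuccEquiv'_symm_none]

theorem permInsert_succAbove (a b : Fin (m + 1)) (τ : Equiv.Perm (Fin m)) (j : Fin m) :
    permInsert a b τ (a.succAbove j) = b.succAbove (τ j) := by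
  simp [permInsert, finSuccEquiv'_succAbove, finSuccEquiv'_symm_some]

theorem permInsert_permErase (a : Fin (m + 1)) (σ : Equiv.Perm (Fin (m + 1))) :
    permInsert a (σ a) (permErase a σ) = σ := by
  ext x : 1
  rcases eq_or_ne x a with rfl | hx
  · rw [permInsert_apply_self]
  · obtain ⟨j, rfl⟩ := Fin.exists_succAbove_eq hx
    rw [permInsert_succAbove, succAbove_permErase]

theorem permErase_permInsert (a b : Fin (m + 1)) (τ : Equiv.Perm (Fin m)) :
    permErase a (permInsert a b τ) = τ := by
  ext j : 1
  have h := succAbove_permErase a (permInsert a b τ) j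
  rw [permInsert_succAbove, permInsert_apply_self] at h
  exact Fin.succAbove_right_injective h

end EraseInsert

section Relabel

variable {m : ℕ} {σ : Equiv.Perm (Fin (m + 1))} {τ : Equiv.Perm (Fin m)} {a : Fin (m + 1)}

theorem natPerm_agree_of_lt (hrel : ∀ j, σ (a.succAbove j) = (σ a).succAbove (τ j)) {k : ℕ}
    (hk : k < a) :
    natPerm τ k = natPerm σ k ∨ (σ a ≤ natPerm σ k ∧ σ a ≤ natPerm τ k) := by
  have hkm : k < m := by omega
  have hfix : a.succAbove ⟨k, hkm⟩ = ⟨k, by omega⟩ :=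
    Fin.ext (by rw [Fin.val_succAbove, if_pos hk])
  have h := congrArg Fin.val (hrel ⟨k, hkm⟩)
  rw [hfix, Fin.val_succAbove] at h
  rw [natPerm_of_lt σ (by omega), natPerm_of_lt τ hkm]
  split_ifs at h <;> omega

theorem matchCount_eq_of_succAbove (hrel : ∀ j, σ (a.succAbove j) = (σ a).succAbove (τ j))
    {r : ℕ} (hr : r < a)
    (hc : matchCount (natPerm σ) r ≤ σ a ∨ matchCount (natPerm τ) r ≤ σ a) :
    matchCount (natPerm τ) r = matchCount (natPerm σ) r := by
  rcases hc with hc | hc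
  · exact matchCount_eq_of_agree (fun k hk => natPerm_agree_of_lt hrel (by omega)) hc
  · refine (matchCount_eq_of_agree (fun k hk => ?_) hc).symm
    exact (natPerm_agree_of_lt hrel (by omega)).imp Eq.symm And.symm

theorem le_natPerm_iff_of_succAbove (hrel : ∀ j, σ (a.succAbove j) = (σ a).succAbove (τ j))
    {k : ℕ} (hk : k < a) : σ a ≤ natPerm σ k ↔ σ a ≤ natPerm τ k := by
  rcases natPerm_agree_of_lt hrel hk with h | h
  · rw [h]
  · exact iff_of_true h.1 h.2

end Relabel

/-- Here `σ = π⁻¹` maps ranks to indices, so this counts the permutations for which the vertex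
of rank `r` is matched: it is `a(n, r + 1)` (see `aIdx_succ`). -/
def numMatchedAtRank (n r : ℕ) : ℕ :=
  #{σ : Equiv.Perm (Fin n) | matchCount (natPerm σ) r ≤ natPerm σ r}

theorem card_matched_and_succ_eq {m r : ℕ} (hr : r < m) :
    #{σ : Equiv.Perm (Fin (m + 1)) | matchCount (natPerm σ) r ≤ natPerm σ r ∧
      natPerm σ (r + 1) = matchCount (natPerm σ) r} = numMatchedAtRank m r := by
  set a : Fin (m + 1) := ⟨r + 1, by omega⟩
  have hra : r < (a : ℕ) := Nat.lt_succ_self r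
  have hlast (σ : Equiv.Perm (Fin (m + 1))) : natPerm σ (r + 1) = σ a := natPerm_val σ a
  have hcnt_lt (τ : Equiv.Perm (Fin m)) : matchCount (natPerm τ) r < m + 1 :=
    (matchCount_le _ r).trans_lt (by omega)
  refine card_nbij' (permErase a) (fun τ => permInsert a ⟨_, hcnt_lt τ⟩ τ) ?_ ?_ ?_ ?_
  · intro σ hσ
    simp only [mem_coe, mem_filter, mem_univ, true_and, hlast] at hσ ⊢
    have hrel (j : Fin m) := (succAbove_permErase a σ j).symm
    rw [matchCount_eq_of_succAbove hrel hra (Or.inl hσ.2.ge), ← hσ.2,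
      ← le_natPerm_iff_of_succAbove hrel hra, hσ.2]
    exact hσ.1
  · intro τ hτ
    simp only [mem_coe, mem_filter, mem_univ, true_and, hlast] at hτ ⊢
    set σ := permInsert a ⟨_, hcnt_lt τ⟩ τ
    have hσa : σ a = ⟨_, hcnt_lt τ⟩ := permInsert_apply_self _ _ _
    have hrel (j : Fin m) : σ (a.succAbove j) = (σ a).succAbove (τ j) := by
      rw [hσa]; exact permInsert_succAbove _ _ _ _
    have hcnt := matchCount_eq_of_succAbove hrel hra (Or.inr (by rw [hσa]))
    rw [← hcnt, hσa]
    refine ⟨?_, rfl⟩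
    simpa [hσa] using (le_natPerm_iff_of_succAbove hrel hra).2 (by rwa [hσa])
  · intro σ hσ
    simp only [mem_coe, mem_filter, mem_univ, true_and, hlast] at hσ
    have hrel (j : Fin m) := (succAbove_permErase a σ j).symm
    have hσa : (⟨_, hcnt_lt (permErase a σ)⟩ : Fin (m + 1)) = σ a := by
      ext
      change matchCount _ r = _
      rw [matchCount_eq_of_succAbove hrel hra (Or.inl hσ.2.ge), hσ.2]
    simp only [hσa, permInsert_permErase]
  · intro τ _
    exact permErase_permInsert _ _ τ

/-- Swapping the vertices of ranks `r` and `r + 1` exchanges "`r + 1` matched, `r` not" with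
"`r` matched and `r + 1` below the count". -/
theorem card_matched_and_succ_ne {m r : ℕ} (hr : r < m) :
    #{σ : Equiv.Perm (Fin (m + 1)) | matchCount (natPerm σ) r ≤ natPerm σ r ∧
      natPerm σ (r + 1) ≠ matchCount (natPerm σ) r} = numMatchedAtRank (m + 1) (r + 1) := by
  rw [numMatchedAtRank,
    ← card_filter_add_card_filter_not
      (p := fun σ => matchCount (natPerm σ) r < natPerm σ (r + 1)),
    ← card_filter_add_card_filter_not
      (s := {σ | matchCount (natPerm σ) (r + 1) ≤ natPerm σ (r + 1)})
      (p := fun σ => matchCount (natPerm σ) r ≤ natPerm σ r),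
    filter_filter, filter_filter, filter_filter, filter_filter]
  congr 1
  · congr 1
    ext σ
    simp only [mem_filter, mem_univ, true_and]
    rw [matchCount_succ]
    split_ifs <;> omega
  · set s : Equiv.Perm (Fin (m + 1)) := Equiv.swap ⟨r, by omega⟩ ⟨r + 1, by omega⟩
    refine card_equiv (Equiv.mulRight s) fun σ => ?_
    have hval (k : ℕ) : natPerm (σ * s) k = natPerm σ (Equiv.swap r (r + 1) k) :=
      natPerm_mul_swap σ _ _ k
    have hcnt : matchCount (natPerm (σ * s)) r = matchCount (natPerm σ) r :=
      matchCount_congr fun k hk => by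
        rw [hval, Equiv.swap_apply_of_ne_of_ne (by omega) (by omega)]
    simp only [mem_filter, mem_univ, true_and, Equiv.coe_mulRight]
    rw [matchCount_succ, hcnt, hval, hval, Equiv.swap_apply_left, Equiv.swap_apply_right]
    split_ifs <;> omega

theorem numMatchedAtRank_succ {m r : ℕ} (hr : r < m) :
    numMatchedAtRank (m + 1) r = numMatchedAtRank (m + 1) (r + 1) + numMatchedAtRank m r := by
  rw [← card_matched_and_succ_ne hr, ← card_matched_and_succ_eq hr, numMatchedAtRank,
    ← card_filter_add_card_filter_not
      (p := fun σ => natPerm σ (r + 1) = matchCount (natPerm σ) r),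
    filter_filter, filter_filter, add_comm]

theorem forall_fixed_lt_succ_iff_permErase {m : ℕ} {σ : Equiv.Perm (Fin (m + 1))}
    {a : Fin (m + 1)} (ha : σ a = a) :
    (∀ x, σ x = x → (x : ℕ) < a + 1) ↔ ∀ j, permErase a σ j = j → (j : ℕ) < a := by
  have hrel (j : Fin m) : σ (a.succAbove j) = a.succAbove (permErase a σ j) := by
    rw [← succAbove_permErase, ha]
  constructor
  · intro h j hj
    have := h (a.succAbove j) (by rw [hrel, hj])
    rw [Fin.val_succAbove] at this
    split_ifs at this <;> omega
  · intro h x hx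
    rcases eq_or_ne x a with rfl | hne
    · omega
    obtain ⟨j, rfl⟩ := Fin.exists_succAbove_eq hne
    have hj := h j (Fin.succAbove_right_injective ((hrel j).symm.trans hx))
    rw [Fin.val_succAbove, if_pos hj]
    omega

theorem dIdx_succ {m k : ℕ} (hk : k ≤ m) :
    dIdx (m + 1) (k + 1) = dIdx (m + 1) k + dIdx m k := by
  set a : Fin (m + 1) := ⟨k, by omega⟩
  rw [dIdx, ← card_filter_add_card_filter_not (p := fun σ => σ a = a), filter_filter,
    filter_filter, add_comm]
  congr 1
  · congr 1
    ext σ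
    simp only [mem_filter, mem_univ, true_and]
    constructor
    · rintro ⟨h, ha⟩ x hx
      have := h x hx
      have : x ≠ a := by rintro rfl; exact ha hx
      have : (x : ℕ) ≠ k := fun h' => this (Fin.ext h')
      omega
    · intro h
      exact ⟨fun x hx => (h x hx).trans (Nat.lt_succ_self k), fun ha => (h a ha).false⟩
  · refine card_nbij' (permErase a) (permInsert a a) ?_ ?_ ?_ ?_
    · intro σ hσ
      simp only [mem_coe, mem_filter, mem_univ, true_and] at hσ ⊢
      exact (forall_fixed_lt_succ_iff_permErase hσ.2).1 hσ.1
    · intro τ hτ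
      simp only [mem_coe, mem_filter, mem_univ, true_and] at hτ ⊢
      have ha := permInsert_apply_self a a τ
      refine ⟨(forall_fixed_lt_succ_iff_permErase ha).2 ?_, ha⟩
      rwa [permErase_permInsert]
    · intro σ hσ
      simp only [mem_coe, mem_filter, mem_univ, true_and] at hσ
      conv_rhs => rw [← permInsert_permErase a σ, hσ.2]
    · intro τ _
      exact permErase_permInsert a a τ

theorem numMatchedAtRank_eq_dIdx : ∀ {r n : ℕ}, r < n → numMatchedAtRank n r = dIdx n (n - r)
  | 0, n, _ => by
    rw [numMatchedAtRank, dIdx, Nat.sub_zero, filter_true_of_mem, filter_true_of_mem] <;>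
      simp [matchCount]
  | r + 1, n, hr => by
    obtain ⟨m, rfl⟩ : ∃ m, n = m + 1 := ⟨n - 1, by omega⟩
    have hsplit := numMatchedAtRank_succ (m := m) (r := r) (by omega)
    have hd := dIdx_succ (m := m) (k := m - r) (by omega)
    rw [numMatchedAtRank_eq_dIdx (r := r) (n := m + 1) (by omega),
      numMatchedAtRank_eq_dIdx (r := r) (n := m) (by omega),
      show m + 1 - r = m - r + 1 by omega] at hsplit
    rw [show m + 1 - (r + 1) = m - r by omega]
    omega

theorem aIdx_succ {n r : ℕ} (hr : r < n) : aIdx n (r + 1) = numMatchedAtRank n r := by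
  refine card_equiv (Equiv.inv _) fun π => ?_
  simp only [mem_filter, mem_univ, true_and, Equiv.inv_apply, Nat.add_sub_cancel]
  constructor
  · rintro ⟨v, hv, hmatched⟩
    have hπv : π v = ⟨r, hr⟩ := Fin.ext hv
    rw [mem_rankMatched, matchIndex, hv] at hmatched
    rwa [natPerm_of_lt _ hr, ← hπv, Equiv.Perm.coe_inv, Equiv.symm_apply_apply]
  · intro h
    refine ⟨π⁻¹ ⟨r, hr⟩, by simp, ?_⟩
    rw [mem_rankMatched, matchIndex, Equiv.Perm.coe_inv, Equiv.apply_symm_apply,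
      ← natPerm_of_lt _ hr]
    exact h

theorem stmt_6_general (n i : ℕ) (h1 : 1 ≤ i) (h2 : i ≤ n) :
    aIdx n i = dIdx n (n + 1 - i) := by
  obtain ⟨r, rfl⟩ : ∃ r, i = r + 1 := ⟨i - 1, by omega⟩
  rw [aIdx_succ (by omega), numMatchedAtRank_eq_dIdx (by omega), Nat.add_sub_add_right]

/-- For every integer `n ≥ 1` and every `i` with `1 ≤ i ≤ n`, `a(n,i) = d(n, n+1−i)`. -/
theorem stmt_6 (n i : ℕ) (hn : 1 ≤ n) (h1 : 1 ≤ i) (h2 : i ≤ n) :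
    aIdx n i = dIdx n (n + 1 - i) :=
  stmt_6_general n i h1 h2
end
end

section
/- For every integer n ≥ 1, a(n) = (n+1)! − a(n+1, n+1). -/
/-!
Give a new vertex the top rank and insert it at position `p ∈ {0, …, n}` into a ranking `π` of `n`
vertices; this is a bijection between pairs `(π, p)` and rankings of `n + 1` vertices. On the
monotone graph, Ranking matches `u_1, …, u_{x(π)}` and then nobody, and the top-ranked vertex is
only chosen when it is the sole available neighbour. So the extended run copies the run for `π`
until it stalls, and the new vertex is matched iff `p ≥ x(π)`. Hence the top-ranked vertex is
unmatched in exactly `Σ_π x(π) = a(n)` of the `(n+1)!` rankings.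
-/

open scoped Classical

noncomputable section

open Finset

section Greedy

variable {n : ℕ} {α : Type*} [LinearOrder α]

def available (adj : ℕ → Fin n → Prop) (key : Fin n → α) (j : ℕ) : Finset (Fin n) :=
  (univ.filter fun i => adj j i) \ greedyRun adj key j

lemma pickMin_spec {key : Fin n → α} {c : Finset (Fin n)} {v : Fin n}
    (h : pickMin key c = some v) : v ∈ c ∧ ∀ w ∈ c, key v ≤ key w := by
  unfold pickMin at h
  split_ifs at h with hc
  cases h
  exact Classical.choose_spec (c.exists_min_image key hc)

lemma pickMin_eq_none_iff {key : Fin n → α} {c : Finset (Fin n)} :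
    pickMin key c = none ↔ c = ∅ := by
  unfold pickMin
  split_ifs with hc
  · simpa using hc.ne_empty
  · simpa [nonempty_iff_ne_empty] using hc

lemma pickMin_eq_some_of_lt {key : Fin n → α} {c : Finset (Fin n)} {v : Fin n}
    (hv : v ∈ c) (hmin : ∀ w ∈ c, w ≠ v → key v < key w) : pickMin key c = some v := by
  cases hu : pickMin key c with
  | none => exact absurd (pickMin_eq_none_iff.mp hu) (ne_empty_of_mem hv)
  | some u =>
    obtain ⟨hu_mem, hu_min⟩ := pickMin_spec hu
    by_contra hne
    exact (hu_min v hv).not_gt (hmin u hu_mem fun h => hne (h ▸ rfl))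

lemma exists_pickMin_eq_some {key : Fin n → α} {c : Finset (Fin n)} (hc : c.Nonempty) :
    ∃ v, pickMin key c = some v :=
  Option.ne_none_iff_exists'.mp (mt pickMin_eq_none_iff.mp hc.ne_empty)

variable {adj : ℕ → Fin n → Prop} {key : Fin n → α} {j : ℕ}

lemma greedyRun_succ_of_pickMin_eq_some {v : Fin n}
    (h : pickMin key (available adj key j) = some v) :
    greedyRun adj key (j + 1) = insert v (greedyRun adj key j) := by
  unfold available at h
  rw [greedyRun, h]

lemma greedyRun_succ_of_pickMin_eq_none (h : pickMin key (available adj key j) = none) :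
    greedyRun adj key (j + 1) = greedyRun adj key j := by
  unfold available at h
  rw [greedyRun, h]

lemma greedyRun_mono : Monotone (greedyRun adj key) := by
  refine monotone_nat_of_le_succ fun j => ?_
  cases h : pickMin key (available adj key j) with
  | none => rw [greedyRun_succ_of_pickMin_eq_none h]
  | some v => rw [greedyRun_succ_of_pickMin_eq_some h]; exact subset_insert _ _

lemma mem_greedyRun_succ {v : Fin n} (hv : v ∈ greedyRun adj key (j + 1)) :
    v ∈ greedyRun adj key j ∨ adj j v := by
  cases h : pickMin key (available adj key j) with
  | none => rw [greedyRun_succ_of_pickMin_eq_none h] at hv; exact .inl hv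
  | some u =>
    rw [greedyRun_succ_of_pickMin_eq_some h, mem_insert] at hv
    obtain rfl | hv := hv
    · exact .inr (mem_filter.mp (mem_sdiff.mp (pickMin_spec h).1).1).2
    · exact .inl hv

lemma notMem_greedyRun_of_not_adj {v : Fin n} (hv : v ∉ greedyRun adj key j)
    (hadj : ∀ k, j ≤ k → ¬adj k v) {k : ℕ} (hk : j ≤ k) : v ∉ greedyRun adj key k := by
  induction k, hk using Nat.le_induction with
  | base => exact hv
  | succ k hjk ih => exact fun h => (mem_greedyRun_succ h).elim ih (hadj k hjk)

end Greedy

section Monotone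

variable {n : ℕ}

lemma mem_filter_monoAdj {k : ℕ} {i : Fin n} : i ∈ univ.filter (fun i => monoAdj n k i) ↔ k ≤ i :=
  mem_filter_univ _

lemma available_monoAdj_eq_empty_of_le {α : Type*} [LinearOrder α] (key : Fin n → α) {j : ℕ}
    (hj : n ≤ j) : available (monoAdj n) key j = ∅ := by
  rw [available, sdiff_eq_empty_iff_subset]
  intro i hi
  rw [mem_filter_monoAdj] at hi
  exact absurd (hj.trans hi) (not_le.mpr i.isLt)

lemma exists_available_monoAdj_eq_empty (π : Equiv.Perm (Fin n)) :
    ∃ j, available (monoAdj n) (fun i => π i) j = ∅ :=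
  ⟨n, available_monoAdj_eq_empty_of_le _ le_rfl⟩

/-- The arrival time of the first unmatched `u_j`. Neighbourhoods only shrink, so all later
arrivals are unmatched too and `x(π) = stopIdx π`. -/
def stopIdx (π : Equiv.Perm (Fin n)) : ℕ := Nat.find (exists_available_monoAdj_eq_empty π)

variable (π : Equiv.Perm (Fin n)) {j : ℕ}

lemma stopIdx_le : stopIdx π ≤ n :=
  Nat.find_min' _ (available_monoAdj_eq_empty_of_le _ le_rfl)

lemma available_stopIdx : available (monoAdj n) (fun i => π i) (stopIdx π) = ∅ :=
  Nat.find_spec (exists_available_monoAdj_eq_empty π)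

lemma available_nonempty_of_lt_stopIdx (h : j < stopIdx π) :
    (available (monoAdj n) (fun i => π i) j).Nonempty :=
  nonempty_iff_ne_empty.mpr (Nat.find_min (exists_available_monoAdj_eq_empty π) h)

lemma greedyRun_eq_of_stopIdx_le (h : stopIdx π ≤ j) :
    greedyRun (monoAdj n) (fun i => π i) j = greedyRun (monoAdj n) (fun i => π i) (stopIdx π) := by
  induction j, h using Nat.le_induction with
  | base => rfl
  | succ k hk ih =>
    refine (greedyRun_succ_of_pickMin_eq_none (pickMin_eq_none_iff.mpr ?_)).trans ih
    refine subset_empty.mp ((available_stopIdx π).symm ▸ ?_)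
    unfold available
    rw [ih]
    refine sdiff_subset_sdiff (fun i hi => ?_) subset_rfl
    rw [mem_filter_monoAdj] at hi ⊢
    exact hk.trans hi

lemma card_greedyRun_of_le_stopIdx (h : j ≤ stopIdx π) :
    #(greedyRun (monoAdj n) (fun i => π i) j) = j := by
  induction j with
  | zero => rfl
  | succ k ih =>
    obtain ⟨v, hv⟩ := exists_pickMin_eq_some (key := fun i => π i)
      (available_nonempty_of_lt_stopIdx π h)
    rw [greedyRun_succ_of_pickMin_eq_some hv,
      card_insert_of_notMem (mem_sdiff.mp (pickMin_spec hv).1).2, ih (by omega)]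

lemma xSize_eq_stopIdx : xSize n π = stopIdx π := by
  rw [xSize, rankMatched, greedyRun_eq_of_stopIdx_le π (stopIdx_le π)]
  exact card_greedyRun_of_le_stopIdx π le_rfl

end Monotone

section InsertTop

variable {n : ℕ}

/-- The ranking of `n + 1` vertices that gives `v_p` the top rank and ranks the other vertices,
in their order, as `π` does. -/
def insertTop (π : Equiv.Perm (Fin n)) (p : Fin (n + 1)) : Equiv.Perm (Fin (n + 1)) :=
  ((finSuccEquiv' p).trans (Equiv.optionCongr π)).trans (finSuccEquiv' (Fin.last n)).symm

variable (π : Equiv.Perm (Fin n)) (p : Fin (n + 1))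

@[simp]
lemma insertTop_apply_self : insertTop π p p = Fin.last n := by
  simp [insertTop, finSuccEquiv'_at, finSuccEquiv'_symm_none]

@[simp]
lemma insertTop_apply_succAbove (k : Fin n) : insertTop π p (p.succAbove k) = (π k).castSucc := by
  simp [insertTop, finSuccEquiv'_succAbove, finSuccEquiv'_symm_some, Fin.succAbove_last]

lemma insertTop_symm_apply_last : (insertTop π p).symm (Fin.last n) = p := by
  rw [Equiv.symm_apply_eq, insertTop_apply_self]

lemma insertTop_bijective :
    Function.Bijective (fun x : Equiv.Perm (Fin n) × Fin (n + 1) => insertTop x.1 x.2) := by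
  refine (Fintype.bijective_iff_injective_and_card _).mpr ⟨?_, ?_⟩
  · rintro ⟨π, p⟩ ⟨π', p'⟩ h
    obtain rfl : p = p' := by
      rw [← insertTop_symm_apply_last π p, ← insertTop_symm_apply_last π' p']
      exact congrArg (fun τ : Equiv.Perm _ => τ.symm (Fin.last n)) h
    refine Prod.ext (Equiv.ext fun k => Fin.castSucc_injective n ?_) rfl
    simpa using DFunLike.congr_fun h (p.succAbove k)
  · simp [Fintype.card_perm, Nat.factorial_succ, mul_comm]

lemma le_val_succAbove_iff {k : ℕ} (hk : k ≤ p) (i : Fin n) : k ≤ p.succAbove i ↔ k ≤ i := by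
  rcases lt_or_ge i.castSucc p with h | h
  · rw [Fin.succAbove_of_castSucc_lt _ _ h, Fin.val_castSucc]
  · rw [Fin.succAbove_of_le_castSucc _ _ h, Fin.val_succ]
    rw [Fin.le_def, Fin.val_castSucc] at h
    omega

lemma filter_monoAdj_sdiff_map {k : ℕ} (hk : k ≤ p) (S : Finset (Fin n)) :
    (univ.filter fun i => monoAdj (n + 1) k i) \ S.map p.succAboveEmb =
      insert p (((univ.filter fun i => monoAdj n k i) \ S).map p.succAboveEmb) := by
  ext i
  rcases Fin.eq_self_or_eq_succAbove p i with rfl | ⟨i, rfl⟩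
  · simp only [mem_sdiff, mem_insert, true_or, iff_true]
    exact ⟨mem_filter_monoAdj.mpr hk, by simp⟩
  · rw [mem_insert, or_iff_right (Fin.succAbove_ne p i), ← Fin.succAboveEmb_apply, mem_sdiff,
      mem_map', mem_map', mem_sdiff, mem_filter_monoAdj, mem_filter_monoAdj,
      Fin.succAboveEmb_apply, le_val_succAbove_iff p hk]

end InsertTop

section RankingInsertTop

variable {n : ℕ} (π : Equiv.Perm (Fin n)) (p : Fin (n + 1))

lemma pickMin_insertTop {c : Finset (Fin n)} {u : Fin n} (hu : pickMin (fun i => π i) c = some u) :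
    pickMin (fun i => insertTop π p i) (insert p (c.map p.succAboveEmb)) = some (p.succAbove u) := by
  obtain ⟨hu_mem, hu_min⟩ := pickMin_spec hu
  refine pickMin_eq_some_of_lt (mem_insert_of_mem (mem_map_of_mem _ hu_mem)) fun w hw hne => ?_
  rcases mem_insert.mp hw with rfl | hw
  · simp
  · obtain ⟨k, hk, rfl⟩ := mem_map.mp hw
    have hku : k ≠ u := fun h => hne (by rw [h]; rfl)
    simpa using (hu_min k hk).lt_of_ne (π.injective.ne hku.symm)

lemma available_insertTop {k : ℕ} (hk : k ≤ p)
    (hrun : greedyRun (monoAdj (n + 1)) (fun i => insertTop π p i) k =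
      (greedyRun (monoAdj n) (fun i => π i) k).map p.succAboveEmb) :
    available (monoAdj (n + 1)) (fun i => insertTop π p i) k =
      insert p ((available (monoAdj n) (fun i => π i) k).map p.succAboveEmb) := by
  rw [available, hrun, filter_monoAdj_sdiff_map p hk]
  rfl

lemma greedyRun_insertTop {j : ℕ} (hjp : j ≤ p + 1) (hjm : j ≤ stopIdx π) :
    greedyRun (monoAdj (n + 1)) (fun i => insertTop π p i) j =
      (greedyRun (monoAdj n) (fun i => π i) j).map p.succAboveEmb := by
  induction j with
  | zero => rfl
  | succ k ih =>
    have hrun := ih (by omega) (by omega)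
    obtain ⟨u, hu⟩ := exists_pickMin_eq_some (key := fun i => π i)
      (available_nonempty_of_lt_stopIdx π hjm)
    rw [greedyRun_succ_of_pickMin_eq_some hu, map_insert, ← hrun]
    refine greedyRun_succ_of_pickMin_eq_some ?_
    rw [available_insertTop π p (by omega) hrun]
    exact pickMin_insertTop π p hu

lemma mem_rankMatched_insertTop_of_stopIdx_le (h : stopIdx π ≤ p) :
    p ∈ rankMatched (n + 1) (insertTop π p) := by
  have hpick : pickMin (fun i => insertTop π p i)
      (available (monoAdj (n + 1)) (fun i => insertTop π p i) (stopIdx π)) = some p := by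
    rw [available_insertTop π p h (greedyRun_insertTop π p (by omega) le_rfl),
      available_stopIdx, map_empty]
    exact pickMin_eq_some_of_lt (mem_insert_self p ∅) (by simp)
  refine greedyRun_mono (Nat.succ_le_succ (stopIdx_le π)) ?_
  rw [greedyRun_succ_of_pickMin_eq_some hpick]
  exact mem_insert_self _ _

lemma notMem_rankMatched_insertTop_of_lt_stopIdx (h : p < stopIdx π) :
    p ∉ rankMatched (n + 1) (insertTop π p) := by
  have hp : p ∉ greedyRun (monoAdj (n + 1)) (fun i => insertTop π p i) (p + 1) := by
    simp [greedyRun_insertTop π p le_rfl h, Fin.succAbove_ne]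
  refine notMem_greedyRun_of_not_adj hp (fun k hk hadj => ?_) (by omega : (p : ℕ) + 1 ≤ n + 1)
  exact absurd hadj (by simp only [monoAdj]; omega)

lemma mem_rankMatched_insertTop_iff :
    p ∈ rankMatched (n + 1) (insertTop π p) ↔ xSize n π ≤ p := by
  rw [xSize_eq_stopIdx]
  exact ⟨fun hp => not_lt.mp fun h => notMem_rankMatched_insertTop_of_lt_stopIdx π p h hp,
    mem_rankMatched_insertTop_of_stopIdx_le π p⟩

end RankingInsertTop

lemma card_filter_lt_xSize (n : ℕ) :
    #{x : Equiv.Perm (Fin n) × Fin (n + 1) | (x.2 : ℕ) < xSize n x.1} = aVal n := by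
  rw [card_filter, Fintype.sum_prod_type, aVal]
  refine sum_congr rfl fun π _ => ?_
  rw [← card_filter]
  dsimp only
  rw [Fin.card_filter_val_lt, xSize_eq_stopIdx]
  exact min_eq_right ((stopIdx_le π).trans n.le_succ)

lemma card_filter_notMem_rankMatched (n : ℕ) :
    #{τ : Equiv.Perm (Fin (n + 1)) | τ.symm (Fin.last n) ∉ rankMatched (n + 1) τ} = aVal n := by
  rw [← card_filter_lt_xSize]
  refine (card_equiv (Equiv.ofBijective _ insertTop_bijective) fun x => ?_).symm
  simp [insertTop_symm_apply_last, mem_rankMatched_insertTop_iff]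

lemma aIdx_succ_self (n : ℕ) : aIdx (n + 1) (n + 1) =
    #{τ : Equiv.Perm (Fin (n + 1)) | τ.symm (Fin.last n) ∈ rankMatched (n + 1) τ} := by
  unfold aIdx
  congr 1
  ext τ
  simp only [mem_filter_univ, Nat.add_sub_cancel]
  constructor
  · rintro ⟨v, hv, hmem⟩
    rwa [(Equiv.symm_apply_eq τ).mpr (Fin.ext hv).symm]
  · exact fun h => ⟨_, by simp, h⟩

theorem stmt_7_general (n : ℕ) :
    (aVal n : ℤ) = (Nat.factorial (n + 1) : ℤ) - aIdx (n + 1) (n + 1) := by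
  have h := card_filter_add_card_filter_not (s := univ)
    (p := fun τ : Equiv.Perm (Fin (n + 1)) => τ.symm (Fin.last n) ∈ rankMatched (n + 1) τ)
  rw [← aIdx_succ_self, card_filter_notMem_rankMatched, card_univ, Fintype.card_perm,
    Fintype.card_fin] at h
  omega

/-- For every integer `n ≥ 1`, `a(n) = (n+1)! − a(n+1, n+1)`. -/
theorem stmt_7 (n : ℕ) (hn : 1 ≤ n) :
    (aVal n : ℤ) = (Nat.factorial (n + 1) : ℤ) - aIdx (n + 1) (n + 1) :=
  stmt_7_general n

end
end

section
/- Let H_m = Σ_{i=1}^{m} 1/i denote the m-th harmonic number, and for each integer n ≥ 1 let k_n be the largest integer k with 0 ≤ k ≤ n and H_n − H_{n−k} ≤ 1. Then there is a constant C > 0 such that for every n ≥ 1, |k_n + (n − k_n)(1 − H_n + H_{n−k_n}) − ((1 − 1/e)n + 1/2 − 1/(2e))| ≤ C/n. -/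
open scoped Classical

noncomputable section

/-!
Write `m = n - k_n` and `s = H_n - H_m`. The quantity equals `(2n+1)/(2e) - 1/2 - m s`, and
maximality of `k_n` pins `s` to `(1 - 1/m, 1]`. The midpoint rule
`1/(j+1) ≈ log ((2j+3)/(2j+1))`, with error `O(j⁻³)`, gives
`s = log ((2n+1)/(2m+1)) - O(1/m²)`. Hence `2m+1 = (2n+1) e^(-1-u)` with `|u| ≤ 1/m`, and
`e^u = 1 + u + O(u²)` turns this into `(2n+1)/(2e) - 1/2 - m s = O(1/m) = O(1/n)`.
-/

open Real

lemma Real.log_le_sub_inv_div_two {x : ℝ} (hx : 1 ≤ x) : log x ≤ (x - x⁻¹) / 2 :=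
  sinh_log (by linarith) ▸ self_le_sinh_iff.2 (log_nonneg hx)

lemma harm_zero : harm 0 = 0 := by simp [harm]

lemma harm_succ (j : ℕ) : harm (j + 1) = harm j + 1 / (j + 1) := by
  simp [harm, Finset.sum_range_succ]

lemma harm_two : harm 2 = 3 / 2 := by
  norm_num [harm, Finset.sum_range_succ]

lemma monotone_harm : Monotone harm :=
  monotone_nat_of_le_succ fun j => by rw [harm_succ]; exact le_add_of_nonneg_right (by positivity)

lemma monotone_log_sub_harm : Monotone fun j : ℕ => log (2 * j + 1) - harm j := by
  refine monotone_nat_of_le_succ fun j => ?_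
  have h := le_log_one_add_of_nonneg (x := 2 / (2 * j + 1)) (by positivity)
  have hx : 1 + 2 / (2 * (j : ℝ) + 1) = (2 * (j + 1 : ℕ) + 1) / (2 * j + 1) := by
    push_cast; field_simp; ring
  have hbound : 2 * (2 / (2 * (j : ℝ) + 1)) / (2 / (2 * j + 1) + 2) = 1 / (j + 1) := by
    field_simp; ring
  rw [hx, hbound, log_div (by positivity) (by positivity)] at h
  rw [harm_succ]
  linarith

lemma antitone_log_sub_harm_add :
    Antitone fun j : ℕ => log (2 * j + 1) - harm j + 1 / (2 * (2 * j + 1) ^ 2) := by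
  refine antitone_nat_of_succ_le fun j => ?_
  set a : ℝ := 2 * j + 1
  have ha : 1 ≤ a := by simp [a]
  have h := log_le_sub_inv_div_two (x := (a + 2) / a) (by rw [le_div_iff₀ (by positivity)]; linarith)
  rw [log_div (by positivity) (by positivity)] at h
  have hcast : (2 * ((j + 1 : ℕ) : ℝ) + 1) = a + 2 := by push_cast; ring
  rw [hcast, harm_succ]
  have hj : (j : ℝ) + 1 = (a + 1) / 2 := by simp [a]; ring
  rw [hj]
  -- the left side is `1 / ((j + 1) (2j + 1) (2j + 3))`, the midpoint-rule error
  have hmidpoint : ((a + 2) / a - ((a + 2) / a)⁻¹) / 2 - 1 / ((a + 1) / 2) ≤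
      1 / (2 * a ^ 2) - 1 / (2 * (a + 2) ^ 2) := by
    field_simp
    ring_nf
    nlinarith
  linarith

lemma harm_sub_harm_le_log_sub_log {m n : ℕ} (h : m ≤ n) :
    harm n - harm m ≤ log (2 * n + 1) - log (2 * m + 1) := by
  have := monotone_log_sub_harm h
  dsimp only at this
  linarith

lemma log_sub_log_le_harm_sub_harm {m n : ℕ} (h : m ≤ n) :
    log (2 * n + 1) - log (2 * m + 1) ≤ harm n - harm m + 1 / (2 * (2 * m + 1) ^ 2) := by
  have := antitone_log_sub_harm_add h
  dsimp only at this
  have : 0 ≤ 1 / (2 * (2 * (n : ℝ) + 1) ^ 2) := by positivity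
  linarith

lemma le_of_harm_le_one {n : ℕ} (h : harm n ≤ 1) : n ≤ 1 := by
  by_contra! hn
  have := monotone_harm hn
  rw [harm_two] at this
  linarith

lemma le_twelve_mul_of_eq_mul_exp {N M L : ℝ} (hM : 1 ≤ M)
    (hNM : 2 * N + 1 = (2 * M + 1) * exp L) (hL : L ≤ 2) : N ≤ 12 * M := by
  have he : exp L ≤ 8 := calc
    exp L ≤ exp 1 * exp 1 := by rw [← exp_add]; exact exp_le_exp.2 (by linarith)
    _ ≤ 8 := by nlinarith [exp_one_lt_d9, exp_pos 1]
  nlinarith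

lemma abs_sub_mul_le_of_eq_mul_exp {N M s L : ℝ} (hM : 1 ≤ M)
    (hNM : 2 * N + 1 = (2 * M + 1) * exp L) (hs : 1 - 1 / M < s) (hs1 : s ≤ 1) (hsL : s ≤ L)
    (hLs : L ≤ s + 1 / (2 * (2 * M + 1) ^ 2)) :
    |(2 * N + 1) / (2 * exp 1) - 1 / 2 - M * s| ≤ 2 / M := by
  set u := L - 1
  have hM0 : 0 < M := by linarith
  have hδ : (2 * M + 1) * (L - s) ≤ 1 / M := calc
    (2 * M + 1) * (L - s) ≤ (2 * M + 1) * (1 / (2 * (2 * M + 1) ^ 2)) := by gcongr; linarith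
    _ = 1 / (2 * (2 * M + 1)) := by field_simp
    _ ≤ 1 / M := by gcongr; linarith
  have hu : |u| ≤ 1 / M := by
    have : 1 / (2 * (2 * M + 1) ^ 2) ≤ 1 / M := by gcongr; nlinarith
    exact abs_le.2 ⟨by linarith, by linarith⟩
  have hu1 : |u| ≤ 1 := hu.trans (by rw [div_le_one hM0]; exact hM)
  have hquad : |(2 * M + 1) * (exp u - 1 - u)| ≤ 3 / M := calc
    |(2 * M + 1) * (exp u - 1 - u)| ≤ (2 * M + 1) * (1 / M) ^ 2 := by
      rw [abs_mul, abs_of_pos (by positivity)]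
      gcongr
      exact (abs_exp_sub_one_sub_id_le hu1).trans (by rw [← sq_abs]; gcongr)
    _ ≤ 3 / M := by rw [div_pow, le_div_iff₀ hM0]; field_simp; linarith
  -- `exp L = e * exp u` turns `2 N + 1` into `e (2 M + 1) exp u`
  have hsplit : (2 * N + 1) / (2 * exp 1) - 1 / 2 - M * s =
      ((2 * M + 1) * (exp u - 1 - u) + ((2 * M + 1) * (L - s) - (1 - s))) / 2 := by
    rw [hNM, show L = 1 + u by ring, exp_add]
    field_simp
    ring
  have hδ0 : 0 ≤ (2 * M + 1) * (L - s) := mul_nonneg (by positivity) (by linarith)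
  rw [hsplit]
  calc |((2 * M + 1) * (exp u - 1 - u) + ((2 * M + 1) * (L - s) - (1 - s))) / 2|
      ≤ (|(2 * M + 1) * (exp u - 1 - u)| + |(2 * M + 1) * (L - s) - (1 - s)|) / 2 := by
        rw [abs_div, abs_two]; gcongr; exact abs_add_le _ _
    _ ≤ (3 / M + 1 / M) / 2 := by gcongr; exact abs_le.2 ⟨by linarith, by linarith⟩
    _ = 2 / M := by ring

lemma abs_sub_mul_harm_sub_harm_le {m n : ℕ} (hm : 1 ≤ m) (hmn : m ≤ n)
    (hle : harm n - harm m ≤ 1) (hgap : 1 < harm n - harm (m - 1)) :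
    |(2 * n + 1) / (2 * exp 1) - 1 / 2 - m * (harm n - harm m)| ≤ 24 / n := by
  have hM : (1 : ℝ) ≤ m := by exact_mod_cast hm
  have hMN : (m : ℝ) ≤ n := by exact_mod_cast hmn
  have hsucc : harm m = harm (m - 1) + 1 / m := by
    conv_lhs => rw [← Nat.sub_add_cancel hm]
    rw [harm_succ, Nat.cast_sub hm, Nat.cast_one, sub_add_cancel]
  set L := log (2 * n + 1) - log (2 * m + 1)
  have hNM : 2 * (n : ℝ) + 1 = (2 * m + 1) * exp L := by
    rw [exp_sub, exp_log (by positivity), exp_log (by positivity)]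
    field_simp
  have hsL : harm n - harm m ≤ L := harm_sub_harm_le_log_sub_log hmn
  have hLs : L ≤ harm n - harm m + 1 / (2 * (2 * m + 1) ^ 2) := log_sub_log_le_harm_sub_harm hmn
  have hL2 : L ≤ 2 := by
    have : 1 / (2 * (2 * (m : ℝ) + 1) ^ 2) ≤ 1 := by rw [div_le_one (by positivity)]; nlinarith
    linarith
  have hsize := le_twelve_mul_of_eq_mul_exp hM hNM hL2
  calc _ ≤ 2 / (m : ℝ) := abs_sub_mul_le_of_eq_mul_exp hM hNM (by linarith) hle hsL hLs
    _ ≤ 24 / n := by rw [div_le_div_iff₀ (by linarith) (by linarith)]; linarith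

lemma add_sub_mul_one_sub_sub_eq (n k a b : ℝ) :
    k + (n - k) * (1 - a + b) - ((1 - 1 / exp 1) * n + 1 / 2 - 1 / (2 * exp 1)) =
      (2 * n + 1) / (2 * exp 1) - 1 / 2 - (n - k) * (a - b) := by
  field_simp
  ring

/-- With `H_m` the `m`-th harmonic number and, for each `n ≥ 1`, `k_n` the largest
integer `k` with `0 ≤ k ≤ n` and `H_n − H_{n−k} ≤ 1`, there is a constant `C > 0` such
that for every `n ≥ 1`,
`|k_n + (n − k_n)(1 − H_n + H_{n−k_n}) − ((1 − 1/e)n + 1/2 − 1/(2e))| ≤ C/n`. -/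
theorem stmt_11 :
    ∃ C : ℝ, 0 < C ∧ ∀ n : ℕ, 1 ≤ n → ∀ k : ℕ, k ≤ n →
      harm n - harm (n - k) ≤ 1 →
      (∀ k' : ℕ, k' ≤ n → harm n - harm (n - k') ≤ 1 → k' ≤ k) →
      |(k : ℝ) + ((n : ℝ) - (k : ℝ)) * (1 - harm n + harm (n - k)) -
        ((1 - 1 / Real.exp 1) * n + 1 / 2 - 1 / (2 * Real.exp 1))| ≤ C / n := by
  refine ⟨24, by norm_num, fun n hn k hk hle hmax => ?_⟩
  rw [add_sub_mul_one_sub_sub_eq, ← Nat.cast_sub hk]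
  obtain ⟨m, hm⟩ : ∃ m, n - k = m := ⟨_, rfl⟩
  rw [hm] at hle ⊢
  rcases Nat.eq_zero_or_pos m with rfl | hm1
  · obtain rfl : n = 1 := le_antisymm (le_of_harm_le_one (by simpa [harm_zero] using hle)) hn
    have h0 : 0 < 3 / (2 * exp 1) := by positivity
    have h1 : 3 / (2 * exp 1) ≤ 3 / 2 := by gcongr; linarith [add_one_le_exp (1 : ℝ)]
    norm_num [abs_le]
    constructor <;> linarith
  · refine abs_sub_mul_harm_sub_harm_le hm1 (by omega) hle ?_
    by_contra! h
    have := hmax (k + 1) (by omega) (by rwa [show n - (k + 1) = m - 1 by omega])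
    omega
end
end

section
/- Fix integers n ≥ 2 and 1 ≤ i < n. For a permutation π of {1, …, n}, let B_i(π) be the permutation obtained from π by swapping the items at ranks i and i+1 (so the vertex of rank i under B_i(π) is the vertex of rank i+1 under π, and vice versa). If the vertex of rank i+1 under B_i(π) (namely v_{π^{-1}(i)}) is matched by the Ranking greedy process on MonotoneG with permutation B_i(π), then the vertex of rank i under π (the same vertex v_{π^{-1}(i)}) is matched by the Ranking greedy process on MonotoneG with permutation π. -/
open scoped Classical

noncomputable section

lemma greedyRun_mono_succ {n : ℕ} {α : Type*} [LinearOrder α] (adj : ℕ → Fin n → Prop)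
    (key : Fin n → α) (j : ℕ) : greedyRun adj key j ⊆ greedyRun adj key (j + 1) := by
  rw [greedyRun]
  cases h : pickMin key ((Finset.univ.filter fun i => adj j i) \ greedyRun adj key j) with
  | none => exact Finset.Subset.refl _
  | some v => exact Finset.subset_insert _ _

lemma pickMin_eq_or {n : ℕ} (a b : Fin n) (hab : (a : ℕ) + 1 = (b : ℕ))
    (κ κ' : Fin n → Fin n) (hκ : Function.Injective κ) (hκ' : Function.Injective κ')
    (v w : Fin n) (hv : κ v = a) (hw : κ w = b) (hv' : κ' v = b) (hw' : κ' w = a)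
    (hother : ∀ x, x ≠ v → x ≠ w → κ' x = κ x) (C : Finset (Fin n)) :
    pickMin κ C = pickMin κ' C ∨ pickMin κ C = some v := by
  by_cases hC : C.Nonempty
  · have hpick : pickMin κ C = some (Classical.choose (Finset.exists_min_image C κ hC)) := by
      simp [pickMin, hC]
    have hpick' : pickMin κ' C = some (Classical.choose (Finset.exists_min_image C κ' hC)) := by
      simp [pickMin, hC]
    set x := Classical.choose (Finset.exists_min_image C κ hC) with hxdef
    set y := Classical.choose (Finset.exists_min_image C κ' hC) with hydef
    obtain ⟨hxC, hxmin⟩ := Classical.choose_spec (Finset.exists_min_image C κ hC)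
    obtain ⟨hyC, hymin⟩ := Classical.choose_spec (Finset.exists_min_image C κ' hC)
    by_cases hxv : x = v
    · right; rw [hpick, hxv]
    · left
      rw [hpick, hpick']
      -- show x = y : x also minimizes κ'
      have hxmin' : ∀ z ∈ C, κ' x ≤ κ' z := by
        by_cases hxw : x = w
        · -- x = w is the κ-min; then v ∉ C and w also κ'-min
          subst hxw
          have hvC : v ∉ C := by
            intro hvC
            have := hxmin v hvC
            rw [hw, hv] at this
            have : (b : ℕ) ≤ (a : ℕ) := this
            omega
          intro z hzC
          rcases eq_or_ne z x with rfl | hzx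
          · exact le_refl _
          · have hzv : z ≠ v := fun h => hvC (h ▸ hzC)
            rw [hother z hzv hzx, hw']
            have h1 := hxmin z hzC
            rw [hw] at h1
            have hzκ : κ z ≠ a := by
              intro h; exact hzv (hκ (h.trans hv.symm))
            have : (a : ℕ) < (κ z : ℕ) := by
              have hba : (b : ℕ) ≤ (κ z : ℕ) := h1
              omega
            exact le_of_lt (by exact_mod_cast this)
        · -- x ∉ {v, w}: κ' x = κ x, and κ x < a, so x still minimal
          have hx' : κ' x = κ x := hother x hxv hxw
          intro z hzC
          rcases eq_or_ne z v with rfl | hzv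
          · -- need κ' x ≤ κ' v = b; κ x ≤ κ v = a < b
            have h1 := hxmin z hzC
            rw [hv] at h1
            rw [hx', hv']
            have : (κ x : ℕ) ≤ (a : ℕ) := h1
            have : (κ x : ℕ) ≤ (b : ℕ) := by omega
            exact_mod_cast this
          · rcases eq_or_ne z w with rfl | hzw
            · -- need κ' x ≤ κ' w = a; κ x ≤ κ w = b, κ x ≠ b, κ x ≠ a ⇒ κ x < a
              have h1 := hxmin z hzC
              rw [hw] at h1
              have hxa : κ x ≠ a := fun h => hxv (hκ (h.trans hv.symm))
              have hxb : κ x ≠ b := fun h => hxw (hκ (h.trans hw.symm))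
              rw [hx', hw']
              have h2 : (κ x : ℕ) ≤ (b : ℕ) := h1
              have h3 : (κ x : ℕ) ≠ (b : ℕ) := fun h => hxb (Fin.ext h)
              have h4 : (κ x : ℕ) ≠ (a : ℕ) := fun h => hxa (Fin.ext h)
              have : (κ x : ℕ) ≤ (a : ℕ) := by omega
              exact_mod_cast this
            · rw [hx', hother z hzv hzw]; exact hxmin z hzC
      have : x = y := by
        apply hκ'
        exact le_antisymm (hxmin' y hyC) (hymin x hxC)
      rw [this]
  · simp [pickMin, hC]

lemma run_invariant {n : ℕ} (adj : ℕ → Fin n → Prop) (a b : Fin n)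
    (hab : (a : ℕ) + 1 = (b : ℕ)) (κ κ' : Fin n → Fin n)
    (hκ : Function.Injective κ) (hκ' : Function.Injective κ')
    (v w : Fin n) (hv : κ v = a) (hw : κ w = b) (hv' : κ' v = b) (hw' : κ' w = a)
    (hother : ∀ x, x ≠ v → x ≠ w → κ' x = κ x) :
    ∀ j, greedyRun adj κ j = greedyRun adj κ' j ∨ v ∈ greedyRun adj κ j := by
  intro j
  induction j with
  | zero => left; rfl
  | succ j ih =>
    rcases ih with heq | hvin
    · set C := (Finset.univ.filter fun i => adj j i) \ greedyRun adj κ j with hCdef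
      rcases pickMin_eq_or a b hab κ κ' hκ hκ' v w hv hw hv' hw' hother C with hp | hp
      · left
        rw [greedyRun, greedyRun, ← heq, ← hCdef, ← hp]
      · right
        rw [greedyRun, ← hCdef, hp]
        exact Finset.mem_insert_self _ _
    · right
      exact greedyRun_mono_succ adj κ j hvin

/-- Fix `n ≥ 2` and `1 ≤ i < n` (1-indexed ranks; rank `i` corresponds to the rank value
`i - 1` in the 0-indexed encoding). Let `B_i(π)` be obtained from `π` by swapping the
items at ranks `i` and `i+1`. If the vertex of rank `i+1` under `B_i(π)`, namely
`π⁻¹(i)`, is matched by the Ranking greedy process on `MonotoneG` with permutation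
`B_i(π)`, then the same vertex `π⁻¹(i)` (of rank `i` under `π`) is matched by the
Ranking greedy process on `MonotoneG` with permutation `π`. -/
theorem stmt_14 (n i : ℕ) (hn : 2 ≤ n) (h1 : 1 ≤ i) (h2 : i < n) (π : Equiv.Perm (Fin n))
    (hmatched : π.symm ⟨i - 1, by omega⟩ ∈
      rankMatched n (π.trans (Equiv.swap ⟨i - 1, by omega⟩ ⟨i, h2⟩))) :
    π.symm ⟨i - 1, by omega⟩ ∈ rankMatched n π := by
  set a : Fin n := ⟨i - 1, by omega⟩ with ha
  set b : Fin n := ⟨i, h2⟩ with hb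
  have hab : (a : ℕ) + 1 = (b : ℕ) := by simp [ha, hb]; omega
  have hv : (fun x => π x) (π.symm a) = a := by simp
  have hw : (fun x => π x) (π.symm b) = b := by simp
  have hv' : (fun x => (π.trans (Equiv.swap a b)) x) (π.symm a) = b := by
    simp [Equiv.swap_apply_left]
  have hw' : (fun x => (π.trans (Equiv.swap a b)) x) (π.symm b) = a := by
    simp [Equiv.swap_apply_right]
  have hother : ∀ x, x ≠ π.symm a → x ≠ π.symm b →
      (fun x => (π.trans (Equiv.swap a b)) x) x = (fun x => π x) x := by
    intro x hxa hxb
    simp only [Equiv.trans_apply]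
    apply Equiv.swap_apply_of_ne_of_ne
    · intro h; exact hxa (by rw [← h]; simp)
    · intro h; exact hxb (by rw [← h]; simp)
  have key := run_invariant (monoAdj n) a b hab (fun x => π x)
    (fun x => (π.trans (Equiv.swap a b)) x) π.injective (π.trans (Equiv.swap a b)).injective
    (π.symm a) (π.symm b) hv hw hv' hw' hother n
  rcases key with heq | hvin
  · unfold rankMatched at hmatched ⊢
    rw [heq]
    exact hmatched
  · exact hvin

end
end
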